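/- (Deterministic success of the second CAST decoding iteration.) Let N and m be positive integers with m dividing N, and let A ∈ ℂ^{m×N} be the partial IDFT matrix. Fix ω₀ ∈ {1,…,N/m} and let Γ = {ω₀ + cN/m : c = 0,1,…,m−1}. Let Ω ⊆ Γ with |Ω| = k, let x : Ω → ℂ, let ṽ ∈ ℂ^m, and set ỹ = Σ_{ω∈Ω} x_ω·a_ω + ṽ. If min_{ω∈Ω}|x_ω| > 2‖ṽ‖₂, then for every ω_i ∈ Ω and every ω_j ∈ Γ∖Ω we have |⟨a_{ω_i}, ỹ⟩| > |⟨a_{ω_j}, ỹ⟩|; consequently the k indices of Γ with the largest values of |⟨a_ω, ỹ⟩| are exactly the elements of Ω. -/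

import Mathlib

/-!
Indices in one residue class modulo `N / m` differ by `t · N / m`, so the Gram entries of the
corresponding columns are `m⁻¹ ∑_{l < m} e^{2πi t l / m}`, which vanish unless `m ∣ t`, i.e. unless
the indices coincide: these columns, in particular those indexed by `Γ`, are orthonormal. Hence
`⟨a_ω, ỹ⟩ = x_ω + ⟨a_ω, ṽ⟩` on `Ω` and `⟨a_ω, ỹ⟩ = ⟨a_ω, ṽ⟩` on `Γ ∖ Ω`, with `|⟨a_ω, ṽ⟩| ≤ ‖ṽ‖`.
Since `|x_ω| > 2‖ṽ‖`, the correlations on `Ω` exceed `‖ṽ‖` and those off `Ω` do not. A set of `k`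
indices whose correlations dominate those of the rest of `Γ` then has to be `Ω`.
-/

open Complex Real

/-- The ω-th column of the partial IDFT matrix `A ∈ ℂ^{m×N}` with entries
`A_{l,ω} = (1/√m)·exp(2πi(l−1)(ω−1)/N)` (here indexed from 0). -/
noncomputable def idftCol (N m : ℕ) (ω : Fin N) : EuclideanSpace ℂ (Fin m) :=
  WithLp.toLp 2 (fun l => ((1 / Real.sqrt m : ℝ) : ℂ) *
    Complex.exp (2 * Real.pi * Complex.I * ((l : ℕ) : ℂ) * ((ω : ℕ) : ℂ) / (N : ℂ)))

open Finset

theorem geom_sum_exp_two_pi_I_int_div_eq_zero {m : ℕ} {t : ℤ} (ht : ¬ (m : ℤ) ∣ t) :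
    ∑ l ∈ range m, exp (2 * π * I * t / m) ^ l = 0 := by
  rcases eq_or_ne m 0 with rfl | hm
  · simp
  have hζ := Complex.isPrimitiveRoot_exp m hm
  have hexp : exp (2 * π * I * t / m) = exp (2 * π * I / m) ^ t := by
    rw [← Complex.exp_int_mul]; congr 1; ring
  have hne : exp (2 * π * I * t / m) ≠ 1 := by
    rwa [hexp, Ne, hζ.zpow_eq_one_iff_dvd]
  rw [geom_sum_eq hne, hexp, ← zpow_natCast, ← zpow_mul, mul_comm t, zpow_mul, hζ.zpow_eq_one,
    one_zpow, sub_self, zero_div]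

theorem conj_idftCol_mul_idftCol (N m : ℕ) (ω ω' : Fin N) (l : Fin m) :
    (starRingEnd ℂ) (idftCol N m ω l) * idftCol N m ω' l =
      (m : ℂ)⁻¹ * exp (2 * π * I * (((ω' : ℕ) : ℂ) - (ω : ℕ)) / N) ^ (l : ℕ) := by
  have hsq : ((1 / √m : ℝ) : ℂ) * ((1 / √m : ℝ) : ℂ) = (m : ℂ)⁻¹ := by
    rw [← ofReal_mul, div_mul_div_comm, Real.mul_self_sqrt m.cast_nonneg]; simp
  simp only [idftCol, map_mul, conj_ofReal, ← exp_conj, map_div₀, map_natCast, map_ofNat, conj_I]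
  rw [← Complex.exp_nat_mul, mul_mul_mul_comm, hsq, ← Complex.exp_add]
  congr 2
  ring

theorem inner_idftCol (N m : ℕ) (ω ω' : Fin N) :
    inner ℂ (idftCol N m ω) (idftCol N m ω') =
      (m : ℂ)⁻¹ * ∑ l ∈ range m, exp (2 * π * I * (((ω' : ℕ) : ℂ) - (ω : ℕ)) / N) ^ l := by
  rw [PiLp.inner_apply, mul_sum, ← Fin.sum_univ_eq_sum_range]
  exact sum_congr rfl fun l _ => (mul_comm _ _).trans (conj_idftCol_mul_idftCol N m ω ω' l)

theorem orthonormal_idftCol_domRestrict_modEq {N m : ℕ} (hdvd : m ∣ N) (r : ℕ) :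
    Orthonormal ℂ ({ω : Fin N | (ω : ℕ) ≡ r [MOD N / m]}.domRestrict (idftCol N m)) := by
  obtain ⟨d, rfl⟩ := hdvd
  rw [orthonormal_iff_ite]
  rintro ⟨ω, hω : (ω : ℕ) ≡ r [MOD m * d / m]⟩ ⟨ω', hω' : (ω' : ℕ) ≡ r [MOD m * d / m]⟩
  simp only [Set.domRestrict_apply, Subtype.mk.injEq, inner_idftCol]
  obtain ⟨hm, hd⟩ := mul_ne_zero_iff.mp (Nat.pos_iff_ne_zero.mp ω.pos)
  rw [Nat.mul_div_cancel_left d (Nat.pos_of_ne_zero hm)] at hω hω'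
  split_ifs with h
  · subst h
    simp [hm]
  obtain ⟨t, ht⟩ : (d : ℤ) ∣ (ω' : ℕ) - (ω : ℕ) := (hω.trans hω'.symm).dvd
  have hexp : exp (2 * π * I * (((ω' : ℕ) : ℂ) - (ω : ℕ)) / ↑(m * d)) =
      exp (2 * π * I * t / m) := by
    have hdiff : ((ω' : ℕ) : ℂ) - (ω : ℕ) = d * t := by exact_mod_cast ht
    have hd : (d : ℂ) ≠ 0 := by exact_mod_cast hd
    rw [hdiff]; push_cast; congr 1; field_simp
  have ht : ¬ (m : ℤ) ∣ t := by
    rintro ⟨s, rfl⟩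
    have hdiff : (((ω' : ℕ) : ℤ) - (ω : ℕ)) = 0 := by
      have hNdvd : ((m * d : ℕ) : ℤ) ∣ (ω' : ℕ) - (ω : ℕ) := ⟨s, by rw [ht]; push_cast; ring⟩
      refine Int.eq_zero_of_abs_lt_dvd hNdvd ?_
      have := ω.isLt; have := ω'.isLt
      rw [abs_lt]; constructor <;> omega
    exact h (Fin.ext (by omega))
  rw [hexp, geom_sum_exp_two_pi_I_int_div_eq_zero ht, mul_zero]

section Orthonormal

variable {𝕜 E ι : Type*} [RCLike 𝕜] [NormedAddCommGroup E] [InnerProductSpace 𝕜 E]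
  {e : ι → E} {Γ : Set ι} {s : Finset ι}

theorem Orthonormal.norm_inner_le_norm (he : Orthonormal 𝕜 (Γ.domRestrict e)) {i : ι}
    (hi : i ∈ Γ) (v : E) : ‖inner 𝕜 (e i) v‖ ≤ ‖v‖ := by
  have hei : ‖e i‖ = 1 := he.norm_eq_one ⟨i, hi⟩
  simpa [hei] using _root_.norm_inner_le_norm (𝕜 := 𝕜) (e i) v

theorem Orthonormal.inner_sum_smul_of_mem (he : Orthonormal 𝕜 (Γ.domRestrict e))
    (hs : ↑s ⊆ Γ) (x : ι → 𝕜) {i : ι} (hi : i ∈ s) :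
    inner 𝕜 (e i) (∑ j ∈ s, x j • e j) = x i := by
  rw [inner_sum, sum_eq_single_of_mem i hi]
  · have hei : ‖e i‖ = 1 := he.norm_eq_one ⟨i, hs hi⟩
    simp [inner_smul_right, inner_self_eq_norm_sq_to_K, hei]
  · intro j hj hji
    have hij : inner 𝕜 (e i) (e j) = 0 :=
      he.inner_eq_zero (show (⟨i, hs hi⟩ : Γ) ≠ ⟨j, hs hj⟩ by simpa using hji.symm)
    rw [inner_smul_right, hij, mul_zero]

theorem Orthonormal.inner_sum_smul_of_notMem (he : Orthonormal 𝕜 (Γ.domRestrict e))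
    (hs : ↑s ⊆ Γ) (x : ι → 𝕜) {i : ι} (hi : i ∈ Γ) (his : i ∉ s) :
    inner 𝕜 (e i) (∑ j ∈ s, x j • e j) = 0 := by
  refine (inner_sum _ _ _).trans (sum_eq_zero fun j hj => ?_)
  have hij : inner 𝕜 (e i) (e j) = 0 :=
    he.inner_eq_zero (show (⟨i, hi⟩ : Γ) ≠ ⟨j, hs hj⟩ by rintro ⟨⟩; exact his hj)
  rw [inner_smul_right, hij, mul_zero]

theorem Orthonormal.norm_inner_le_of_notMem (he : Orthonormal 𝕜 (Γ.domRestrict e))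
    (hs : ↑s ⊆ Γ) (x : ι → 𝕜) (v : E) {i : ι} (hi : i ∈ Γ) (his : i ∉ s) :
    ‖inner 𝕜 (e i) (∑ j ∈ s, x j • e j + v)‖ ≤ ‖v‖ := by
  rw [inner_add_right, he.inner_sum_smul_of_notMem hs x hi his, zero_add]
  exact he.norm_inner_le_norm hi v

theorem Orthonormal.lt_norm_inner_of_mem (he : Orthonormal 𝕜 (Γ.domRestrict e))
    (hs : ↑s ⊆ Γ) (x : ι → 𝕜) (v : E) {i : ι} (hi : i ∈ s) (hx : 2 * ‖v‖ < ‖x i‖) :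
    ‖v‖ < ‖inner 𝕜 (e i) (∑ j ∈ s, x j • e j + v)‖ := by
  rw [inner_add_right, he.inner_sum_smul_of_mem hs x hi]
  have hnoise := he.norm_inner_le_norm (hs hi) v
  have htri := norm_sub_le (x i + inner 𝕜 (e i) v) (inner 𝕜 (e i) v)
  rw [add_sub_cancel_right] at htri
  linarith

end Orthonormal

theorem Finset.eq_of_card_eq_of_forall_lt_of_forall_le {α β : Type*} [DecidableEq α] [Preorder β]
    {f : α → β} {Γ S T : Finset α} (hS : S ⊆ Γ) (hT : T ⊆ Γ) (hcard : S.card = T.card)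
    (hT_lt : ∀ i ∈ T, ∀ j ∈ Γ \ T, f j < f i) (hS_le : ∀ i ∈ S, ∀ j ∈ Γ \ S, f j ≤ f i) :
    S = T := by
  suffices hTS : T ⊆ S from (eq_of_subset_of_card_le hTS hcard.le).symm
  intro a haT
  by_contra haS
  obtain ⟨b, hbS, hbT⟩ : ∃ b ∈ S, b ∉ T := by
    by_contra! hST
    exact haS (eq_of_subset_of_card_le hST hcard.ge ▸ haT)
  exact lt_irrefl _ ((hT_lt a haT b (mem_sdiff.2 ⟨hS hbS, hbT⟩)).trans_le
    (hS_le b hbS a (mem_sdiff.2 ⟨hT haT, haS⟩)))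

theorem cast_second_iteration_success_general (N m k : ℕ)
    (hdvd : m ∣ N)
    (ω₀ : ℕ)
    (g : Fin m → Fin N) (hg : ∀ c : Fin m, (g c : ℕ) = ω₀ + (c : ℕ) * (N / m))
    (Ω : Finset (Fin N)) (hΩsub : Ω ⊆ Finset.image g Finset.univ) (hk : Ω.card = k)
    (x : Fin N → ℂ) (v y : EuclideanSpace ℂ (Fin m))
    (hy : y = (∑ ω ∈ Ω, x ω • idftCol N m ω) + v)
    (hmin : ∀ ω ∈ Ω, 2 * ‖v‖ < ‖x ω‖) :
    (∀ ωi ∈ Ω, ∀ ωj ∈ Finset.image g Finset.univ \ Ω,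
        ‖(inner ℂ (idftCol N m ωj) y : ℂ)‖ < ‖(inner ℂ (idftCol N m ωi) y : ℂ)‖) ∧
      (∀ S ⊆ Finset.image g Finset.univ, S.card = k →
        (∀ ωi ∈ S, ∀ ωj ∈ Finset.image g Finset.univ \ S,
          ‖(inner ℂ (idftCol N m ωj) y : ℂ)‖ ≤ ‖(inner ℂ (idftCol N m ωi) y : ℂ)‖) →
        S = Ω) := by
  subst hy
  have he := orthonormal_idftCol_domRestrict_modEq hdvd ω₀
  have hΓ : ∀ ω ∈ image g univ, (ω : ℕ) ≡ ω₀ [MOD N / m] := by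
    simp only [mem_image, mem_univ, true_and, forall_exists_index, forall_apply_eq_imp_iff]
    intro c
    rw [hg c]
    exact Nat.add_mul_mod_self_right ω₀ c (N / m)
  have hΩ : ↑Ω ⊆ {ω : Fin N | (ω : ℕ) ≡ ω₀ [MOD N / m]} := fun ω hω => hΓ ω (hΩsub hω)
  have hsep : ∀ ωi ∈ Ω, ∀ ωj ∈ image g univ \ Ω,
      ‖inner ℂ (idftCol N m ωj) (∑ ω ∈ Ω, x ω • idftCol N m ω + v)‖ <
        ‖inner ℂ (idftCol N m ωi) (∑ ω ∈ Ω, x ω • idftCol N m ω + v)‖ := by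
    intro ωi hωi ωj hωj
    obtain ⟨hωjΓ, hωjΩ⟩ := mem_sdiff.1 hωj
    exact (he.norm_inner_le_of_notMem hΩ x v (hΓ ωj hωjΓ) hωjΩ).trans_lt
      (he.lt_norm_inner_of_mem hΩ x v hωi (hmin ωi hωi))
  exact ⟨hsep, fun S hS hSk hdom =>
    eq_of_card_eq_of_forall_lt_of_forall_le hS hΩsub (hSk.trans hk.symm) hsep hdom⟩

/-- deterministic success of the second CAST decoding iteration:
with `m ∣ N`, `Γ = {ω₀ + cN/m : c = 0,…,m−1}`, support `Ω ⊆ Γ` of size `k`,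
`ỹ = Σ_{ω∈Ω} x_ω a_ω + ṽ`, and `min_{ω∈Ω}|x_ω| > 2‖ṽ‖₂`, every correlation on the support
strictly dominates every correlation off the support (within `Γ`); consequently, the set of
`k` indices of `Γ` with the largest values of `|⟨a_ω, ỹ⟩|` is exactly `Ω`. -/
theorem cast_second_iteration_success (N m k : ℕ) (hN : 0 < N) (hm : 0 < m)
    (hdvd : m ∣ N)
    (ω₀ : ℕ) (hω₀ : ω₀ < N / m)
    (g : Fin m → Fin N) (hg : ∀ c : Fin m, (g c : ℕ) = ω₀ + (c : ℕ) * (N / m))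
    (Ω : Finset (Fin N)) (hΩsub : Ω ⊆ Finset.image g Finset.univ) (hk : Ω.card = k)
    (x : Fin N → ℂ) (v y : EuclideanSpace ℂ (Fin m))
    (hy : y = (∑ ω ∈ Ω, x ω • idftCol N m ω) + v)
    (hmin : ∀ ω ∈ Ω, 2 * ‖v‖ < ‖x ω‖) :
    (∀ ωi ∈ Ω, ∀ ωj ∈ Finset.image g Finset.univ \ Ω,
        ‖(inner ℂ (idftCol N m ωj) y : ℂ)‖ < ‖(inner ℂ (idftCol N m ωi) y : ℂ)‖) ∧
      (∀ S ⊆ Finset.image g Finset.univ, S.card = k →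
        (∀ ωi ∈ S, ∀ ωj ∈ Finset.image g Finset.univ \ S,
          ‖(inner ℂ (idftCol N m ωj) y : ℂ)‖ ≤ ‖(inner ℂ (idftCol N m ωi) y : ℂ)‖) →
        S = Ω) :=
  cast_second_iteration_success_general N m k hdvd ω₀ g hg Ω hΩsub hk x v y hy hmin
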